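/- Let N be a ℤ[t]-submodule of a length-one ℤ[t]-module M of exponent 2ⁿ. Then the closure N̄ has colength one in M, and N̄ is contained in every colength-one submodule of M that contains N; thus N̄ is the unique smallest colength-one submodule of M containing N. -/

import Mathlib

/-
Write `R = ℤ[t]`, `π = 2`, and let `K` be the preimage of `N̄` in a free module `V` mapping onto
`M`; then `π ^ n • V ≤ K` and `K` is saturated: `p • x ∈ K` with `p ∉ (π)` forces `x ∈ K`.
Such a `K` is finitely generated and stably free, so `M ⧸ N̄ ≅ V ⧸ K` has length one.
When `π • V ≤ K`, the quotient `V ⧸ K` is a finitely generated torsion-free module over the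
principal ideal domain `R ⧸ (π)`, hence `≅ (R ⧸ (π))^m`, and Schanuel's lemma against
`0 → R^m --π--> R^m → (R ⧸ (π))^m → 0` gives `K × R^m ≅ R^m × V`. In general one inducts on `n`
through `K ≤ {x | π • x ∈ K} ≤ V`, the middle term satisfying the hypotheses for `n - 1`.
Minimality: if `Q` has length one and `π ^ n • Q = 0`, then `p • x = 0` with `p ∉ (π)` forces
`x = 0`, so every colength-one `P ⊇ N` is saturated and contains `N̄`.
-/

/-- An `R`-module `M` has *length one* if there is a short exact sequence
`0 → F₁ → F₀ → M → 0` with `F₀`, `F₁` finitely generated free `R`-modules. -/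
def IsLengthOne (R M : Type*) [CommRing R] [AddCommGroup M] [Module R M] : Prop :=
  ∃ (k l : ℕ) (f : (Fin k → R) →ₗ[R] (Fin l → R)) (g : (Fin l → R) →ₗ[R] M),
    Function.Injective f ∧ Function.Surjective g ∧ LinearMap.range f = LinearMap.ker g

lemma prime_two_polyInt : Prime (2 : Polynomial ℤ) := by
  rw [show (2 : Polynomial ℤ) = Polynomial.C 2 by simp]
  exact Polynomial.prime_C_iff.mpr Int.prime_two

lemma span_two_isPrime : (Ideal.span {(2 : Polynomial ℤ)}).IsPrime :=
  (Ideal.span_singleton_prime (by norm_num)).mpr prime_two_polyInt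

/-- The closure `N̄ = {x ∈ M : p • x ∈ N for some p ∈ ℤ[t] with p ∉ 2ℤ[t]}` of a
submodule `N` of a `ℤ[t]`-module `M`, as a submodule. -/
def Submodule.polyClosure {M : Type*} [AddCommGroup M] [Module (Polynomial ℤ) M]
    (N : Submodule (Polynomial ℤ) M) : Submodule (Polynomial ℤ) M where
  carrier := {x | ∃ p : Polynomial ℤ, p ∉ Ideal.span {(2 : Polynomial ℤ)} ∧ p • x ∈ N}
  zero_mem' := by
    refine ⟨1, fun h => prime_two_polyInt.not_unit
      (isUnit_of_dvd_one (Ideal.mem_span_singleton.mp h)), by simpa using N.zero_mem⟩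
  add_mem' := by
    rintro a b ⟨p, hp, hpa⟩ ⟨q, hq, hqb⟩
    refine ⟨p * q, fun h => ?_, ?_⟩
    · rcases span_two_isPrime.mem_or_mem h with h' | h'
      · exact hp h'
      · exact hq h'
    · rw [smul_add]
      exact N.add_mem
        (by rw [mul_comm, mul_smul]; exact N.smul_mem q hpa)
        (by rw [mul_smul]; exact N.smul_mem p hqb)
  smul_mem' := by
    rintro r a ⟨p, hp, hpa⟩
    exact ⟨p, hp, by rw [smul_comm]; exact N.smul_mem r hpa⟩

open Module LinearMap

theorem Module.Projective.schanuel {R P P' Q : Type*} [Ring R] [AddCommGroup P] [Module R P]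
    [AddCommGroup P'] [Module R P'] [AddCommGroup Q] [Module R Q]
    [Projective R P] [Projective R P'] {h : P →ₗ[R] Q} {q : P' →ₗ[R] Q}
    (hh : Function.Surjective h) (hq : Function.Surjective q) :
    Nonempty ((ker h × P') ≃ₗ[R] (ker q × P)) := by
  obtain ⟨φ, hφ⟩ := projective_lifting_property q h hq
  obtain ⟨σ, hσ⟩ := projective_lifting_property h q hh
  have hφ' : ∀ x, q (φ x) = h x := LinearMap.congr_fun hφ
  have hσ' : ∀ y, h (σ y) = q y := LinearMap.congr_fun hσ
  exact ⟨
    { toFun := fun ky => (⟨ky.2 - φ (ky.1 + σ ky.2), by simp [hφ', hσ']⟩, ky.1 + σ ky.2)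
      invFun := fun zx => (⟨zx.2 - σ (zx.1 + φ zx.2), by simp [hφ', hσ']⟩, zx.1 + φ zx.2)
      map_add' := fun _ _ => by ext <;> simp <;> abel
      map_smul' := fun _ _ => by ext <;> simp [smul_sub]
      left_inv := fun _ => by ext <;> simp
      right_inv := fun _ => by ext <;> simp }⟩

namespace Module.IsStablyFree

variable {R M N : Type*} [Ring R] [AddCommGroup M] [Module R M] [AddCommGroup N] [Module R N]
  [Free R N]

theorem prod_left [IsStablyFree R M] : IsStablyFree R (N × M) := by
  obtain ⟨W, _, _, _, _, _⟩ := exist_free_prod R M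
  have : Free R ((N × M) × W) := Free.of_equiv (LinearEquiv.prodAssoc R N M W).symm
  exact .of_free_prod R (N × M) W

theorem of_prod_right [Module.Finite R N] [IsStablyFree R (M × N)] : IsStablyFree R M := by
  obtain ⟨W, _, _, _, _, _⟩ := exist_free_prod R (M × N)
  have : Free R (M × (N × W)) := Free.of_equiv (LinearEquiv.prodAssoc R M N W)
  exact .of_free_prod R M (N × W)

end Module.IsStablyFree

section LengthOne

variable {R Q F₁ F₀ : Type*} [CommRing R] [AddCommGroup Q] [Module R Q]
  [AddCommGroup F₁] [Module R F₁] [Free R F₁] [Module.Finite R F₁]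
  [AddCommGroup F₀] [Module R F₀] [Free R F₀] [Module.Finite R F₀]

theorem isLengthOne_of_exact (f : F₁ →ₗ[R] F₀) (g : F₀ →ₗ[R] Q) (hf : Function.Injective f)
    (hg : Function.Surjective g) (hfg : range f = ker g) : IsLengthOne R Q := by
  let e₁ := ((Free.chooseBasis R F₁).reindex (Fintype.equivFin _)).equivFun
  let e₀ := ((Free.chooseBasis R F₀).reindex (Fintype.equivFin _)).equivFun
  refine ⟨_, _, e₀.toLinearMap ∘ₗ f ∘ₗ e₁.symm.toLinearMap, g ∘ₗ e₀.symm.toLinearMap,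
    ?_, hg.comp e₀.symm.surjective, ?_⟩
  · simpa using e₀.injective.comp (hf.comp e₁.symm.injective)
  · rw [range_comp, range_comp, LinearEquiv.range, Submodule.map_top, ker_comp, hfg,
      Submodule.map_equiv_eq_comap_symm]

theorem isLengthOne_of_isStablyFree_ker (g : F₀ →ₗ[R] Q) (hg : Function.Surjective g)
    [Module.Finite R (ker g)] [IsStablyFree R (ker g)] : IsLengthOne R Q := by
  obtain ⟨N, _, _, _, _, _⟩ := IsStablyFree.exist_free_prod R (ker g)
  refine isLengthOne_of_exact ((ker g).subtype.prodMap (LinearMap.id (M := N)))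
    (g ∘ₗ fst R F₀ N) ?_ (hg.comp Prod.fst_surjective) ?_
  · exact Prod.map_injective.mpr ⟨Subtype.val_injective, Function.injective_id⟩
  · rw [range_prodMap, ker_comp, Submodule.range_subtype, range_id]
    exact (Submodule.comap_fst (ker g)).symm

/-- Lifting `π ^ n • id` through the presentation `f` to `B`, the relation `p • v ∈ range f`
becomes `π ^ n ∣ p • B v`, hence `π ^ n ∣ B v` and `v ∈ range f`. -/
theorem IsLengthOne.eq_zero_of_smul_eq_zero [IsDomain R] {π : R} (hπ : Prime π) {n : ℕ}
    (hexp : ∀ x : Q, π ^ n • x = 0) (hQ : IsLengthOne R Q) {p : R} (hp : p ∉ Ideal.span {π})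
    {x : Q} (hpx : p • x = 0) : x = 0 := by
  obtain ⟨k, l, f, g, hf, hg, hfg⟩ := hQ
  have hlift : ∀ y, (π ^ n • LinearMap.id : (Fin l → R) →ₗ[R] _) y ∈ range f := fun y => by
    simp [hfg, hexp]
  obtain ⟨B, hB⟩ := projective_lifting_property f.rangeRestrict
    ((π ^ n • LinearMap.id).codRestrict (range f) hlift) f.surjective_rangeRestrict
  have hfB : ∀ y, f (B y) = π ^ n • y := fun y => congrArg Subtype.val (LinearMap.congr_fun hB y)
  obtain ⟨v, rfl⟩ := hg x
  obtain ⟨w, hw⟩ : p • v ∈ range f := by rw [hfg, mem_ker, map_smul, hpx]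
  have hBv : p • B v = π ^ n • w := hf (by rw [map_smul, map_smul, hfB, hw, smul_comm])
  have hdvd : ∀ i, π ^ n ∣ B v i := fun i =>
    hπ.pow_dvd_of_dvd_mul_left n (hp ∘ Ideal.mem_span_singleton.mpr) ⟨w i, congrFun hBv i⟩
  choose u hu using hdvd
  have hfu : f u = v := smul_right_injective _ (pow_ne_zero n hπ.ne_zero) <| by
    show π ^ n • f u = π ^ n • v
    rw [← map_smul, ← hfB]
    exact congrArg f (funext fun i => (hu i).symm)
  rw [← hfu, ← mem_ker, ← hfg]
  exact mem_range_self f u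

end LengthOne

section Saturated

variable {R V : Type*} [CommRing R] [AddCommGroup V] [Module R V]

def Submodule.IsSaturated (π : R) (K : Submodule R V) : Prop :=
  ∀ p ∉ Ideal.span {π}, ∀ x, p • x ∈ K → x ∈ K

theorem Submodule.IsSaturated.comap {W : Type*} [AddCommGroup W] [Module R W] {π : R}
    {K : Submodule R V} (hK : K.IsSaturated π) (f : W →ₗ[R] V) : (K.comap f).IsSaturated π :=
  fun p hp x hx => hK p hp (f x) (by simpa using hx)

theorem nonempty_ker_piMap_mkQ_equiv [IsDomain R] {π : R} (hπ : π ≠ 0) (ι : Type*) :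
    Nonempty (ker (piMap fun _ : ι => (Ideal.span {π}).mkQ) ≃ₗ[R] (ι → R)) := by
  have hinj : Function.Injective (π • LinearMap.id : (ι → R) →ₗ[R] (ι → R)) :=
    smul_right_injective _ hπ
  have hrange : range (π • LinearMap.id : (ι → R) →ₗ[R] (ι → R)) =
      ker (piMap fun _ : ι => (Ideal.span {π}).mkQ) := by
    ext x
    simp only [mem_range, mem_ker, LinearMap.smul_apply, id_apply, funext_iff, Pi.smul_apply,
      smul_eq_mul, coe_piMap, Pi.map_apply, Submodule.mkQ_apply, Pi.zero_apply,
      Submodule.Quotient.mk_eq_zero, Ideal.mem_span_singleton]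
    exact ⟨fun ⟨y, hy⟩ i => ⟨y i, (hy i).symm⟩, fun h => by
      choose y hy using h
      exact ⟨y, fun i => (hy i).symm⟩⟩
  exact ⟨((LinearEquiv.ofInjective _ hinj).trans (LinearEquiv.ofEq _ _ hrange)).symm⟩

variable {π : R} [IsPrincipalIdealRing (R ⧸ Ideal.span {π})]

theorem Submodule.IsSaturated.exists_quotient_equiv_pi (hπ : Prime π) [Module.Finite R V]
    {K : Submodule R V} (hK : K.IsSaturated π) (hπK : ∀ x, π • x ∈ K) :
    ∃ m, Nonempty ((V ⧸ K) ≃ₗ[R] (Fin m → R ⧸ Ideal.span {π})) := by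
  have : (Ideal.span {π}).IsPrime := (Ideal.span_singleton_prime hπ.ne_zero).mpr hπ
  have htor : IsTorsionBy R (V ⧸ K) π := (isTorsionBy_quotient_iff K π).mpr hπK
  let := htor.module
  have : Module.Finite (R ⧸ Ideal.span {π}) (V ⧸ K) :=
    Module.Finite.of_restrictScalars_finite R _ _
  have : IsTorsionFree (R ⧸ Ideal.span {π}) (V ⧸ K) := by
    refine isTorsionFree_iff_smul_eq_zero.mpr fun c x hcx => ?_
    obtain ⟨p, rfl⟩ := Ideal.Quotient.mk_surjective c
    obtain ⟨v, rfl⟩ := K.mkQ_surjective x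
    rw [or_iff_not_imp_left, Ideal.Quotient.eq_zero_iff_mem]
    intro hp
    rw [htor.mk_smul, ← map_smul, Submodule.mkQ_apply, Submodule.Quotient.mk_eq_zero] at hcx
    rw [Submodule.mkQ_apply, Submodule.Quotient.mk_eq_zero]
    exact hK p hp v hcx
  let b := (Free.chooseBasis (R ⧸ Ideal.span {π}) (V ⧸ K)).reindex (Fintype.equivFin _)
  exact ⟨_, ⟨b.equivFun.restrictScalars R⟩⟩

theorem Submodule.IsSaturated.finite_and_isStablyFree_of_smul_mem [IsDomain R] (hπ : Prime π)
    [Module.Finite R V] [IsStablyFree R V] {K : Submodule R V} (hK : K.IsSaturated π)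
    (hπK : ∀ x, π • x ∈ K) : Module.Finite R K ∧ IsStablyFree R K := by
  obtain ⟨m, ⟨e⟩⟩ := hK.exists_quotient_equiv_pi hπ hπK
  let h := e.toLinearMap ∘ₗ K.mkQ
  have hker : ker h = K := by rw [LinearEquiv.ker_comp, Submodule.ker_mkQ]
  obtain ⟨θ⟩ := Projective.schanuel (h := h) (q := piMap fun _ : Fin m => (Ideal.span {π}).mkQ)
    (e.surjective.comp K.mkQ_surjective)
    (Function.Surjective.piMap fun _ => Submodule.mkQ_surjective _)
  obtain ⟨κ⟩ := nonempty_ker_piMap_mkQ_equiv hπ.ne_zero (Fin m)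
  let eK : (K × (Fin m → R)) ≃ₗ[R] ((Fin m → R) × V) :=
    ((LinearEquiv.ofEq _ _ hker).symm.prodCongr (LinearEquiv.refl _ _)).trans
      (θ.trans (κ.prodCongr (LinearEquiv.refl _ _)))
  have : IsStablyFree R (K × (Fin m → R)) := IsStablyFree.prod_left.equiv eK.symm
  have : Module.Finite R (K × (Fin m → R)) := .equiv eK.symm
  exact ⟨.of_surjective (LinearMap.fst R K (Fin m → R)) Prod.fst_surjective,
    .of_prod_right (N := Fin m → R)⟩

theorem Submodule.IsSaturated.finite_and_isStablyFree_of_pow_smul_mem [IsDomain R] (hπ : Prime π)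
    [Module.Finite R V] [IsStablyFree R V] {K : Submodule R V} (hK : K.IsSaturated π) (n : ℕ)
    (hπK : ∀ x, π ^ n • x ∈ K) : Module.Finite R K ∧ IsStablyFree R K := by
  induction n generalizing K with
  | zero =>
    have hK_top : K = ⊤ := eq_top_iff.mpr fun x _ => by simpa using hπK x
    let e := (LinearEquiv.ofEq _ _ hK_top).trans Submodule.topEquiv
    exact ⟨.equiv e.symm, .equiv e.symm⟩
  | succ n ih =>
    let K' := K.comap (π • LinearMap.id)
    have hKK' : K ≤ K' := fun x hx => K.smul_mem π hx
    obtain ⟨_, _⟩ := ih (K := K')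
      (fun p hp x hx => hK p hp _ (by simpa [K', smul_comm π p] using hx))
      (fun x => by simpa [K', smul_smul, ← pow_succ] using hπK x)
    obtain ⟨_, _⟩ := (hK.comap K'.subtype).finite_and_isStablyFree_of_smul_mem hπ fun x => x.2
    let e := Submodule.comapSubtypeEquivOfLe hKK'
    exact ⟨.equiv e, .equiv e⟩

end Saturated

theorem Submodule.le_polyClosure {M : Type*} [AddCommGroup M] [Module (Polynomial ℤ) M]
    (N : Submodule (Polynomial ℤ) M) : N ≤ N.polyClosure :=
  fun x hx => ⟨1, fun h => span_two_isPrime.ne_top ((Ideal.eq_top_iff_one _).mpr h), by simpa⟩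

theorem Submodule.polyClosure_isSaturated {M : Type*} [AddCommGroup M]
    [Module (Polynomial ℤ) M] (N : Submodule (Polynomial ℤ) M) : N.polyClosure.IsSaturated 2 :=
  fun p hp _ ⟨q, hq, hqx⟩ => ⟨q * p, span_two_isPrime.mul_notMem hq hp, by rwa [mul_smul]⟩

instance : IsPrincipalIdealRing (Polynomial ℤ ⧸ Ideal.span {(2 : Polynomial ℤ)}) := by
  let red := Polynomial.mapRingHom (Int.castRingHom (ZMod 2))
  have hker : RingHom.ker red = Ideal.span {2} := by
    rw [Polynomial.ker_mapRingHom, ZMod.ker_intCastRingHom, Ideal.map_span]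
    simp
  let e := (Ideal.quotEquivOfEq hker.symm).trans
    (RingHom.quotientKerEquivOfSurjective (Polynomial.map_surjective _ ZMod.intCast_surjective))
  exact IsPrincipalIdealRing.of_surjective e.symm.toRingHom e.symm.surjective

theorem closure_smallest_colengthOne
    (M : Type) [AddCommGroup M] [Module (Polynomial ℤ) M]
    (n : ℕ) (hexp : ∀ x : M, (2 : Polynomial ℤ) ^ n • x = 0)
    (hM : IsLengthOne (Polynomial ℤ) M)
    (N : Submodule (Polynomial ℤ) M) :
    N ≤ N.polyClosure ∧
    IsLengthOne (Polynomial ℤ) (M ⧸ N.polyClosure) ∧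
    ∀ P : Submodule (Polynomial ℤ) M, N ≤ P →
      IsLengthOne (Polynomial ℤ) (M ⧸ P) → N.polyClosure ≤ P := by
  refine ⟨N.le_polyClosure, ?_, fun P hNP hP x ⟨p, hp, hpx⟩ => ?_⟩
  · obtain ⟨k, l, -, g, -, hg, -⟩ := hM
    let c := N.polyClosure.mkQ ∘ₗ g
    have hker : N.polyClosure.comap g = ker c := by rw [ker_comp, Submodule.ker_mkQ]
    have hsat : (ker c).IsSaturated 2 := hker ▸ N.polyClosure_isSaturated.comap g
    have hpow : ∀ x, (2 : Polynomial ℤ) ^ n • x ∈ ker c := hker ▸ fun x => by simp [hexp]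
    obtain ⟨_, _⟩ := hsat.finite_and_isStablyFree_of_pow_smul_mem prime_two_polyInt n hpow
    exact isLengthOne_of_isStablyFree_ker c (N.polyClosure.mkQ_surjective.comp hg)
  · have hexpP : ∀ y : M ⧸ P, (2 : Polynomial ℤ) ^ n • y = 0 := fun y => by
      obtain ⟨y, rfl⟩ := P.mkQ_surjective y
      rw [← map_smul, hexp, map_zero]
    rw [← Submodule.Quotient.mk_eq_zero]
    refine hP.eq_zero_of_smul_eq_zero prime_two_polyInt hexpP hp ?_
    rw [← Submodule.Quotient.mk_smul, Submodule.Quotient.mk_eq_zero]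
    exact hNP hpx
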